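/- arXiv:2205.03965 — 2 statements merged into one kernel-verified Lean document; each statement's English description precedes it below -/
import Mathlib

section
/- Let n be a positive integer and let G be a connected graph with at most 4n−2 edges such that G → (nK₂, C₃). Suppose that for every positive integer k, every connected graph G′ with strictly fewer vertices than G and at most 4k−2 edges satisfies G′ ↛ (kK₂, C₃). Then the minimum degree of G is at least two. -/
open SimpleGraph

/-- `G` contains a copy of `H`, i.e. there is an injective graph homomorphism from `H` to `G`. -/
def ContainsCopy {V W : Type*} (G : SimpleGraph V) (H : SimpleGraph W) : Prop :=
  ∃ f : H →g G, Function.Injective f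

/-- `G` arrows `(G₁, G₂)`: for every red/blue colouring of the edges of `G`
(given by a subgraph `R ≤ G` of red edges, the blue edges being `G \ R`),
there is a red copy of `G₁` or a blue copy of `G₂`. -/
def Arrows {V V₁ V₂ : Type*} (G : SimpleGraph V) (G₁ : SimpleGraph V₁) (G₂ : SimpleGraph V₂) :
    Prop :=
  ∀ R : SimpleGraph V, R ≤ G → ContainsCopy R G₁ ∨ ContainsCopy (G \ R) G₂

/-- The matching `nK₂` with `n` edges. -/
def Matching (n : ℕ) : SimpleGraph (Fin n × Fin 2) where
  Adj a b := a.1 = b.1 ∧ a.2 ≠ b.2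
  symm := by constructor; intro a b h; exact ⟨h.1.symm, h.2.symm⟩
  loopless := by constructor; intro a h; exact h.2 rfl

/-- `n` disjoint copies of the graph `H`. -/
def Copies (n : ℕ) {W : Type*} (H : SimpleGraph W) : SimpleGraph (Fin n × W) where
  Adj a b := a.1 = b.1 ∧ H.Adj a.2 b.2
  symm := by constructor; intro a b h; exact ⟨h.1.symm, h.2.symm⟩
  loopless := by constructor; intro a h; exact H.irrefl h.2

/-- Disjoint union of two graphs. -/
def DisjUnion {V W : Type*} (G : SimpleGraph V) (H : SimpleGraph W) : SimpleGraph (V ⊕ W) where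
  Adj a b :=
    match a, b with
    | Sum.inl x, Sum.inl y => G.Adj x y
    | Sum.inr x, Sum.inr y => H.Adj x y
    | _, _ => False
  symm := by
    constructor
    rintro (x | x) (y | y) h
    · exact G.adj_symm h
    · exact h.elim
    · exact h.elim
    · exact H.adj_symm h
  loopless := by
    constructor
    rintro (x | x) h
    · exact G.irrefl h
    · exact H.irrefl h

/-! Deleting a vertex `v` of degree at most one leaves a connected graph with fewer vertices and
no more edges, which still arrows `(nK₂, C₃)`: colour the edge at `v` blue; then a red matching
cannot touch `v`, and neither can a blue triangle, since every vertex of a triangle has two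
neighbours. This contradicts the minimality of `G`. -/

section

variable {V W W₁ W₂ : Type*} {G G' : SimpleGraph V} {H : SimpleGraph W}

theorem ContainsCopy.mono (hle : G ≤ G') (h : ContainsCopy G H) : ContainsCopy G' H :=
  let ⟨f, hf⟩ := h
  ⟨(Hom.ofLE hle).comp f, hf⟩

theorem ContainsCopy.exists_adj (h : ContainsCopy G H) {a b : W} (hab : H.Adj a b) :
    ∃ x y, G.Adj x y :=
  let ⟨f, _⟩ := h
  ⟨f a, f b, f.map_adj hab⟩

theorem containsCopy_induce_of_forall_mem {s : Set V} (f : H →g G) (hf : Function.Injective f)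
    (hs : ∀ x, f x ∈ s) : ContainsCopy (G.induce s) H :=
  ⟨⟨fun x => ⟨f x, hs x⟩, f.map_adj⟩, fun _ _ hxy => hf (congrArg Subtype.val hxy)⟩

theorem ncard_edgeSet_induce_le [Finite V] (s : Set V) :
    (G.induce s).edgeSet.ncard ≤ G.edgeSet.ncard := by
  have hle : (G.induce s).map (Function.Embedding.subtype _) ≤ G :=
    (map_le_iff_le_comap _ _ _).mpr le_rfl
  calc (G.induce s).edgeSet.ncard
      = ((G.induce s).map (Function.Embedding.subtype _)).edgeSet.ncard := by
        rw [edgeSet_map, Set.ncard_image_of_injective _ (Function.Embedding.injective _)]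
    _ ≤ G.edgeSet.ncard := Set.ncard_le_ncard (edgeSet_mono hle)

variable {G₁ : SimpleGraph W₁} {G₂ : SimpleGraph W₂}

theorem Arrows.exists_adj (h : Arrows G G₁ G₂) {a b : W₁} (h₁ : G₁.Adj a b) {c d : W₂}
    (h₂ : G₂.Adj c d) : ∃ x y, G.Adj x y := by
  rcases h ⊥ bot_le with ⟨f, -⟩ | hblue
  · exact (f.map_adj h₁).elim
  · simpa using hblue.exists_adj h₂

theorem Arrows.induce (h : Arrows G G₁ G₂) {s : Set V}
    (hs : ∀ v ∉ s, (G.neighborSet v).Subsingleton)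
    (h₁ : ∀ x, (G₁.neighborSet x).Nonempty) (h₂ : ∀ x, (G₂.neighborSet x).Nontrivial) :
    Arrows (G.induce s) G₁ G₂ := by
  intro R hR
  let ι := Function.Embedding.subtype s
  rcases h (R.map ι) ((map_le_iff_le_comap _ _ _).mpr hR) with ⟨f, hf⟩ | ⟨f, hf⟩
  · left
    rw [← comap_map_eq ι R]
    refine containsCopy_induce_of_forall_mem f hf fun x => ?_
    obtain ⟨y, hxy⟩ := h₁ x
    obtain ⟨-, a, -, -, ha, -⟩ := f.map_adj hxy
    exact ha ▸ a.2
  · right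
    have hle : (G \ R.map ι).induce s ≤ G.induce s \ R :=
      fun _ _ ⟨hG, hR⟩ => ⟨hG, fun h => hR (map_adj_apply.mpr h)⟩
    refine (containsCopy_induce_of_forall_mem f hf fun x => by_contra fun hx => ?_).mono hle
    obtain ⟨y, hy, z, hz, hyz⟩ := h₂ x
    have hy' : f y ∈ G.neighborSet (f x) := (f.map_adj hy).1
    have hz' : f z ∈ G.neighborSet (f x) := (f.map_adj hz).1
    exact hyz (hf (hs _ hx hy' hz'))

end

theorem matching_neighborSet_nonempty {n : ℕ} (x : Fin n × Fin 2) :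
    ((Matching n).neighborSet x).Nonempty := by
  obtain ⟨i, j⟩ := x
  exact ⟨(i, j + 1), rfl, show j ≠ j + 1 by fin_cases j <;> decide⟩

theorem cycleGraph_three_neighborSet_nontrivial (x : Fin 3) :
    ((cycleGraph 3).neighborSet x).Nontrivial := by
  rw [cycleGraph_three_eq_top, neighborSet_top]
  exact ⟨x + 1, by simp, x + 2, by simp, by simp⟩

/-- If `G` is a connected graph with at most `4n−2` edges arrowing
`(nK₂, C₃)`, and for every positive `k` every connected graph with strictly fewer vertices than
`G` and at most `4k−2` edges does not arrow `(kK₂, C₃)`, then the minimum degree of `G` is at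
least two. -/
theorem min_degree_ge_two (n : ℕ) (hn : 0 < n) (V : Type) [Finite V]
    (G : SimpleGraph V) (hconn : G.Connected) (hE : G.edgeSet.ncard ≤ 4 * n - 2)
    (harrow : Arrows G (Matching n) (cycleGraph 3))
    (hmin : ∀ k : ℕ, 0 < k → ∀ (W : Type), Finite W → ∀ H : SimpleGraph W,
      H.Connected → Nat.card W < Nat.card V → H.edgeSet.ncard ≤ 4 * k - 2 →
      ¬ Arrows H (Matching k) (cycleGraph 3)) :
    ∀ v : V, 2 ≤ (G.neighborSet v).ncard := by
  intro v
  by_contra! hdeg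
  have hv : (G.neighborSet v).Subsingleton := Set.ncard_le_one_iff_subsingleton.mp (by omega)
  have hs : ∀ w ∉ ({v}ᶜ : Set V), (G.neighborSet w).Subsingleton := by simpa using hv
  obtain ⟨a, ha⟩ := matching_neighborSet_nonempty (⟨0, hn⟩, 0)
  obtain ⟨b, hb, -⟩ := cycleGraph_three_neighborSet_nontrivial 0
  obtain ⟨x, y, hxy⟩ := harrow.exists_adj ha hb
  have : Nontrivial V := nontrivial_of_ne x y hxy.ne
  obtain ⟨w, hw⟩ := exists_ne v
  have hconn' : (G.induce {v}ᶜ).Connected :=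
    { preconnected := hconn.preconnected.induce_of_degree_eq_one hs, nonempty := ⟨⟨w, hw⟩⟩ }
  exact hmin n hn _ inferInstance _ hconn' (Finite.card_subtype_lt (x := v) (by simp))
    ((ncard_edgeSet_induce_le _).trans hE)
    (harrow.induce hs matching_neighborSet_nonempty cycleGraph_three_neighborSet_nontrivial)
end

section
/- Let n be a positive integer and let G be a connected graph with at most 4n−2 edges such that G → (nK₂, C₃). Suppose that for every positive integer k, every connected graph G′ with either fewer vertices than G, or the same number of vertices and fewer edges than G, satisfies G′ ↛ (kK₂, C₃) whenever G′ has at most 4k−2 edges. Then the maximum degree of G is at most three. -/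
open SimpleGraph

/-!
Suppose `v` has at least four neighbours. For each component `c` of `G - v` let `b_c` be the
largest `k` with `G_c → (kK₂, C₃)`, and fix an extremal colouring of `G_c`: no red
`(b_c + 1)K₂`, no blue triangle. Minimality gives `e(G_c) ≥ 4 b_c - 1` whenever `b_c ≥ 1`.
Colouring all edges at `v` red and every `G_c` extremally gives no blue triangle, so
`n ≤ Σ b_c + 1`; with `e(G) ≤ 4n - 2` this leaves `v` at most three neighbours in each component.
If some component forces, in all its extremal colourings, a blue edge between two neighbours of
`v`, then `G_c + v → ((b_c + 1)K₂, C₃)`, and minimality applied to `G_c + v` produces one edge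
too many. Otherwise colouring the edges at `v` blue gives `n ≤ Σ b_c`, again too many edges.
-/

lemma containsCopy_iff_isContained {V W : Type*} {R : SimpleGraph V} {H : SimpleGraph W} :
    ContainsCopy R H ↔ H ⊑ R :=
  ⟨fun ⟨f, hf⟩ => ⟨f.toCopy hf⟩, fun ⟨f⟩ => ⟨f.toHom, f.injective⟩⟩

lemma ContainsCopy.mono_s16 {V W : Type*} {R R' : SimpleGraph V} {H : SimpleGraph W}
    (h : ContainsCopy R H) (hle : R ≤ R') : ContainsCopy R' H :=
  let ⟨f, hf⟩ := h
  ⟨(Hom.ofLE hle).comp f, hf⟩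

lemma ContainsCopy.of_map {V W U : Type*} {φ : W ↪ V} {R : SimpleGraph W} {H : SimpleGraph U}
    (hH : ∀ x, ∃ y, H.Adj x y) (h : ContainsCopy (R.map φ) H) : ContainsCopy R H := by
  obtain ⟨f, hf⟩ := h
  have hrange : ∀ x, ∃ w, φ w = f x := fun x => by
    obtain ⟨y, hxy⟩ := hH x
    obtain ⟨a, -, -, ha, -⟩ := (map_adj _ _ _ _).1 (f.map_adj hxy)
    exact ⟨a, ha⟩
  choose g hg using hrange
  refine ⟨⟨g, fun {x y} hxy => ?_⟩, fun x y hxy => hf ?_⟩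
  · rw [← map_adj_apply (f := φ), hg, hg]
    exact f.map_adj hxy
  · rw [← hg x, ← hg y]
    exact congrArg φ hxy

lemma Arrows.of_map {V W V₁ V₂ : Type*} {φ : W ↪ V} {A : SimpleGraph W} {H₁ : SimpleGraph V₁}
    {H₂ : SimpleGraph V₂} (hH₁ : ∀ x, ∃ y, H₁.Adj x y) (hH₂ : ∀ x, ∃ y, H₂.Adj x y)
    (h : Arrows (A.map φ) H₁ H₂) : Arrows A H₁ H₂ := by
  intro R hR
  refine (h (R.map φ) (map_monotone φ hR)).imp (ContainsCopy.of_map hH₁)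
    fun h₂ => ContainsCopy.of_map (φ := φ) hH₂ (ContainsCopy.mono_s16 (R' := (A \ R).map φ) h₂ ?_)
  rintro _ _ ⟨hA, hR⟩
  obtain ⟨a, b, hab, rfl, rfl⟩ := (map_adj _ _ _ _).1 hA
  exact map_adj_apply.2 ⟨hab, fun h => hR (map_adj_apply.2 h)⟩

lemma matching_exists_adj {k : ℕ} (x : Fin k × Fin 2) : ∃ y, (Matching k).Adj x y := by
  rcases x with ⟨i, j⟩
  exact ⟨(i, j + 1), rfl, by fin_cases j <;> simp⟩

lemma cycleGraph_three_exists_adj (x : Fin 3) : ∃ y, (cycleGraph 3).Adj x y := by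
  rw [cycleGraph_three_eq_top]
  exact ⟨x + 1, by fin_cases x <;> decide⟩

namespace MatchingTriangle

open Finset

lemma sum_add_le_sum_add {ι : Type*} [Fintype ι] [DecidableEq ι] {f g : ι → ℕ} {a b : ℕ} (i : ι)
    (h : ∀ j ≠ i, f j ≤ g j) (hi : f i + a ≤ g i + b) : ∑ j, f j + a ≤ ∑ j, g j + b := by
  rw [← add_sum_erase _ _ (mem_univ i), ← add_sum_erase _ _ (mem_univ i)]
  have := sum_le_sum (s := univ.erase i) fun j hj => h j (ne_of_mem_erase hj)
  omega

section General

variable {V : Type*}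

def HasMatching (R : SimpleGraph V) (k : ℕ) : Prop :=
  ∃ p : Fin k × Fin 2 ↪ V, ∀ i, R.Adj (p (i, 0)) (p (i, 1))

def MatchingArrow (A : SimpleGraph V) (k : ℕ) : Prop :=
  ∀ R ≤ A, HasMatching R k ∨ ¬(A \ R).CliqueFree 3

lemma containsCopy_matching_iff {R : SimpleGraph V} {k : ℕ} :
    ContainsCopy R (Matching k) ↔ HasMatching R k := by
  constructor
  · rintro ⟨f, hf⟩
    exact ⟨⟨f, hf⟩, fun i => f.map_adj ⟨rfl, by simp⟩⟩
  · rintro ⟨p, hp⟩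
    refine ⟨⟨p, ?_⟩, p.injective⟩
    rintro ⟨i, x⟩ ⟨j, y⟩ ⟨rfl, hxy⟩
    fin_cases x <;> fin_cases y <;> simp_all [(hp i).symm]

lemma containsCopy_triangle_iff {R : SimpleGraph V} :
    ContainsCopy R (cycleGraph 3) ↔ ¬R.CliqueFree 3 := by
  rw [containsCopy_iff_isContained, cycleGraph_three_eq_top, not_cliqueFree_iff_top_isContained]

lemma arrows_iff_matchingArrow {A : SimpleGraph V} {k : ℕ} :
    Arrows A (Matching k) (cycleGraph 3) ↔ MatchingArrow A k := by
  simp only [Arrows, MatchingArrow, containsCopy_matching_iff, containsCopy_triangle_iff]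

lemma cliqueFree_three_iff {B : SimpleGraph V} :
    B.CliqueFree 3 ↔ ∀ x y z, B.Adj x y → B.Adj x z → B.Adj y z → False := by
  classical
  refine ⟨fun h x y z hxy hxz hyz => h {x, y, z} (is3Clique_triple_iff.2 ⟨hxy, hxz, hyz⟩), ?_⟩
  intro h s hs
  obtain ⟨x, y, z, hxy, hxz, hyz, -⟩ := is3Clique_iff.1 hs
  exact h x y z hxy hxz hyz

variable {R : SimpleGraph V} {k : ℕ}

lemma HasMatching.of_finset {m : ℕ} (p : Fin k × Fin 2 ↪ V) (J : Finset (Fin k))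
    (hJ : ∀ j ∈ J, R.Adj (p (j, 0)) (p (j, 1))) (hm : m ≤ #J) : HasMatching R m :=
  let e : Fin m ↪ Fin k :=
    (Fin.castLEEmb hm).trans (J.equivFin.symm.toEmbedding.trans (Function.Embedding.subtype _))
  ⟨(e.prodMap (Function.Embedding.refl _)).trans p, fun _ => hJ _ (J.equivFin.symm _).2⟩

lemma HasMatching.le_sum {ι : Type*} [Fintype ι] [DecidableEq ι] {R : ι → SimpleGraph V}
    {b : ι → ℕ} (f : V → ι) (hf : ∀ i x y, (R i).Adj x y → f x = i)
    (hb : ∀ i, ¬HasMatching (R i) (b i + 1)) (h : HasMatching (⨆ i, R i) k) :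
    k ≤ ∑ i, b i := by
  obtain ⟨p, hp⟩ := h
  have hfib : ∀ j, (R (f (p (j, 0)))).Adj (p (j, 0)) (p (j, 1)) := fun j => by
    obtain ⟨i, hi⟩ := iSup_adj.1 (hp j)
    rwa [hf i _ _ hi]
  calc k = ∑ i, #{j | f (p (j, 0)) = i} := by
        simpa using card_eq_sum_card_fiberwise (s := univ) (t := univ)
          (f := fun j => f (p (j, 0))) (fun _ _ => mem_univ _)
    _ ≤ ∑ i, b i := sum_le_sum fun i _ => by
        by_contra! hlt
        refine hb i (HasMatching.of_finset p _ (fun j hj => ?_) hlt)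
        rw [← (mem_filter.1 hj).2]
        exact hfib j

lemma HasMatching.of_sup_left {S : SimpleGraph V} {v : V} (hS : ∀ x y, S.Adj x y → x = v ∨ y = v)
    (h : HasMatching (S ⊔ R) (k + 1)) : HasMatching R k := by
  obtain ⟨p, hp⟩ := h
  classical
  let J : Finset (Fin (k + 1)) := {j | p (j, 0) ≠ v ∧ p (j, 1) ≠ v}
  have hJ : ∀ j ∈ J, R.Adj (p (j, 0)) (p (j, 1)) := fun j hj => by
    obtain ⟨h0, h1⟩ := (mem_filter.1 hj).2
    exact ((hp j).resolve_left fun hS' => (hS _ _ hS').elim h0 h1)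
  have hJc : #Jᶜ ≤ 1 := card_le_one.2 fun i hi j hj => by
    simp only [J, mem_compl, mem_filter, mem_univ, true_and, not_and_or, not_not] at hi hj
    obtain ⟨a, ha⟩ : ∃ a, p (i, a) = v := hi.elim (⟨0, ·⟩) (⟨1, ·⟩)
    obtain ⟨b, hb⟩ : ∃ b, p (j, b) = v := hj.elim (⟨0, ·⟩) (⟨1, ·⟩)
    exact congrArg Prod.fst (p.injective (ha.trans hb.symm))
  refine HasMatching.of_finset p J hJ ?_
  have := card_add_card_compl J
  simp only [Fintype.card_fin] at this
  omega

lemma two_mul_card_filter_le_ncard (p : Fin k × Fin 2 ↪ V) (N : Set V) (hN : N.Finite)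
    [DecidablePred (· ∈ N)] :
    2 * #{j | p (j, 0) ∈ N ∧ p (j, 1) ∈ N} ≤ N.ncard := by
  set J : Finset (Fin k) := {j | p (j, 0) ∈ N ∧ p (j, 1) ∈ N}
  have hsub : ↑((J ×ˢ univ).map p) ⊆ N := by
    simp only [coe_map, Set.image_subset_iff]
    rintro ⟨j, t⟩ hj
    obtain ⟨h0, h1⟩ := (mem_filter.1 (mem_product.1 hj).1).2
    fin_cases t
    exacts [h0, h1]
  have := Set.ncard_le_ncard hsub hN
  rwa [Set.ncard_coe_finset, card_map, card_product, card_univ, Fintype.card_fin, mul_comm] at this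

lemma forall_ne_adj_of_ncard_le_three {p : Fin k × Fin 2 ↪ V} {N : Set V} (hN : N.Finite)
    (h3 : N.ncard ≤ 3) (hp : ∀ j, ¬R.Adj (p (j, 0)) (p (j, 1)) → p (j, 0) ∈ N ∧ p (j, 1) ∈ N)
    {j₀ : Fin k} (hj₀ : ¬R.Adj (p (j₀, 0)) (p (j₀, 1))) :
    ∀ j ≠ j₀, R.Adj (p (j, 0)) (p (j, 1)) := by
  classical
  have hle : #{j | p (j, 0) ∈ N ∧ p (j, 1) ∈ N} ≤ 1 := by
    have := (two_mul_card_filter_le_ncard p N hN).trans h3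
    omega
  intro j hj
  by_contra hjr
  refine hj (card_le_one.1 hle j ?_ j₀ ?_) <;> simpa using hp _ ‹_›

lemma HasMatching.of_swap {p : Fin k × Fin 2 ↪ V} {j₀ : Fin k} {v : V} (hv : ∀ z, p z ≠ v)
    (hp : ∀ j ≠ j₀, R.Adj (p (j, 0)) (p (j, 1)))
    (h : R.Adj v (p (j₀, 0)) ∨ R.Adj v (p (j₀, 1))) : HasMatching R k := by
  classical
  have hfix : ∀ t z, z ≠ (j₀, t) → Equiv.swap (p (j₀, t)) v (p z) = p z :=
    fun t z hz => Equiv.swap_apply_of_ne_of_ne (p.injective.ne hz) (hv z)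
  have hne : ∀ j ≠ j₀, ∀ t t' : Fin 2, (j, t) ≠ (j₀, t') :=
    fun j hj t t' h => hj (congrArg Prod.fst h)
  rcases h with h | h
  · refine ⟨p.trans (Equiv.swap (p (j₀, 1)) v).toEmbedding, fun j => ?_⟩
    by_cases hj : j = j₀
    · subst hj
      simpa [hfix 1 (j, 0) (by simp)] using h.symm
    · simpa [hfix 1 _ (hne j hj _ _)] using hp j hj
  · refine ⟨p.trans (Equiv.swap (p (j₀, 0)) v).toEmbedding, fun j => ?_⟩
    by_cases hj : j = j₀
    · subst hj
      simpa [hfix 0 (j, 1) (by simp)] using h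
    · simpa [hfix 0 _ (hne j hj _ _)] using hp j hj

lemma MatchingArrow.hasMatching {A : SimpleGraph V} (h : MatchingArrow A k) :
    HasMatching A k :=
  (h A le_rfl).resolve_right fun hT => hT (by simp [cliqueFree_bot])

lemma matchingArrow_zero (A : SimpleGraph V) : MatchingArrow A 0 :=
  fun _ _ => Or.inl ⟨Function.Embedding.ofIsEmpty, fun i => i.elim0⟩

lemma HasMatching.le_card [Finite V] (h : HasMatching R k) :
    k ≤ Nat.card V := by
  obtain ⟨p, -⟩ := h
  have := Nat.card_le_card_of_injective p p.injective
  simp only [Nat.card_eq_fintype_card, Fintype.card_prod, Fintype.card_fin] at this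
  omega

noncomputable def arrowNum [Finite V] (A : SimpleGraph V) : ℕ := sSup {k | MatchingArrow A k}

lemma bddAbove_matchingArrow [Finite V] (A : SimpleGraph V) : BddAbove {k | MatchingArrow A k} :=
  ⟨Nat.card V, fun _ hk => hk.hasMatching.le_card⟩

lemma matchingArrow_arrowNum [Finite V] (A : SimpleGraph V) : MatchingArrow A (arrowNum A) :=
  Nat.sSup_mem ⟨0, matchingArrow_zero A⟩ (bddAbove_matchingArrow A)

lemma exists_extremal_colouring [Finite V] (A : SimpleGraph V) :
    ∃ R ≤ A, ¬HasMatching R (arrowNum A + 1) ∧ (A \ R).CliqueFree 3 := by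
  have : ¬MatchingArrow A (arrowNum A + 1) := fun h =>
    (le_csSup (bddAbove_matchingArrow A) h).not_gt (Nat.lt_succ_self _)
  simpa [MatchingArrow] using this

def ForcesBlueNeighbourEdge (Q : SimpleGraph V) (v : V) (b : ℕ) : Prop :=
  ∀ R ≤ Q.deleteIncidenceSet v, ¬HasMatching R (b + 1) →
    (Q.deleteIncidenceSet v \ R).CliqueFree 3 →
    ∃ x y, (Q.deleteIncidenceSet v \ R).Adj x y ∧ Q.Adj v x ∧ Q.Adj v y

/-- Recolouring red every non-red edge between neighbours of `v` turns a colouring of `Q` into a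
colouring of `Q - v` with no blue edge of that kind; a red `(b + 1)K₂` there uses at most one
recoloured edge (`v` has at most three neighbours), and that edge can be exchanged for a red
edge at `v`, as otherwise it would close a blue triangle with `v`. -/
lemma ForcesBlueNeighbourEdge.matchingArrow_succ {Q : SimpleGraph V} {v : V} {b : ℕ}
    (h : ForcesBlueNeighbourEdge Q v b) (hfin : (Q.neighborSet v).Finite)
    (hdeg : (Q.neighborSet v).ncard ≤ 3) : MatchingArrow Q (b + 1) := by
  classical
  intro R _
  by_contra! hcon
  obtain ⟨hM, hT⟩ := hcon
  set R' := Q.deleteIncidenceSet v ⊓ (R ⊔ fromRel fun x y => Q.Adj v x ∧ Q.Adj v y)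
  obtain ⟨p, hp⟩ : HasMatching R' (b + 1) := by
    by_contra hM'
    have hblue : Q.deleteIncidenceSet v \ R' ≤ Q \ R := fun x y hxy =>
      ⟨deleteIncidenceSet_le _ _ hxy.1, fun hr => hxy.2 ⟨hxy.1, Or.inl hr⟩⟩
    obtain ⟨x, y, hxy, hx, hy⟩ := h R' inf_le_left hM' (hT.anti hblue)
    exact hxy.2 ⟨hxy.1, Or.inr ((fromRel_adj _ _ _).2 ⟨hxy.1.ne, Or.inl ⟨hx, hy⟩⟩)⟩
  have hnbr : ∀ j, ¬R.Adj (p (j, 0)) (p (j, 1)) →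
      p (j, 0) ∈ Q.neighborSet v ∧ p (j, 1) ∈ Q.neighborSet v := fun j hj => by
    rcases (hp j).2 with hr | hf
    · exact absurd hr hj
    · rcases ((fromRel_adj _ _ _).1 hf).2 with h' | h'
      exacts [h', h'.symm]
  by_cases hall : ∀ j, R.Adj (p (j, 0)) (p (j, 1))
  · exact hM ⟨p, hall⟩
  obtain ⟨j₀, hj₀⟩ := not_forall.1 hall
  have hv : ∀ z, p z ≠ v := fun ⟨j, t⟩ => by
    have h01 := (deleteIncidenceSet_adj.1 (hp j).1).2
    fin_cases t
    exacts [h01.1, h01.2]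
  refine hM (HasMatching.of_swap hv (forall_ne_adj_of_ncard_le_three hfin hdeg hnbr hj₀) ?_)
  by_contra! hvr
  obtain ⟨hx, hy⟩ := hnbr j₀ hj₀
  exact cliqueFree_three_iff.1 hT v _ _ ⟨hx, hvr.1⟩ ⟨hy, hvr.2⟩
    ⟨deleteIncidenceSet_le _ _ (hp j₀).1, hj₀⟩

end General

section Components

variable {V : Type*} (G : SimpleGraph V) (v : V)

lemma spanningCoe_induce_adj {s : Set V} {x y : V} :
    (G.induce s).spanningCoe.Adj x y ↔ x ∈ s ∧ y ∈ s ∧ G.Adj x y := by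
  simp only [map_adj, comap_adj, Function.Embedding.subtype_apply, Subtype.exists]
  constructor
  · rintro ⟨x, hx, y, hy, h, rfl, rfl⟩
    exact ⟨hx, hy, h⟩
  · rintro ⟨hx, hy, h⟩
    exact ⟨x, hx, y, hy, h, rfl, rfl⟩

lemma ncard_edgeSet_deleteIncidenceSet_add [Finite V] :
    (G.deleteIncidenceSet v).edgeSet.ncard + (G.neighborSet v).ncard = G.edgeSet.ncard := by
  classical
  rw [edgeSet_deleteIncidenceSet, ← Nat.card_coe_set_eq (G.neighborSet v),
    ← Nat.card_congr (G.incidenceSetEquivNeighborSet v), Nat.card_coe_set_eq]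
  exact Set.ncard_sdiff_add_ncard_of_subset (G.incidenceSet_subset v)

/-- The component `G_c` of `G - v`. Like `G_c + v` below, it is kept as a graph on all of `V`, so
that colourings of different parts of `G` can be glued. -/
def componentGraph (c : (G.deleteIncidenceSet v).ConnectedComponent) : SimpleGraph V :=
  c.toSimpleGraph.spanningCoe

def componentWithVertex (c : (G.deleteIncidenceSet v).ConnectedComponent) : SimpleGraph V :=
  (G.induce (insert v c.supp)).spanningCoe

variable {G v}

lemma componentGraph_adj {c : (G.deleteIncidenceSet v).ConnectedComponent} {x y : V} :
    (componentGraph G v c).Adj x y ↔ x ∈ c.supp ∧ (G.deleteIncidenceSet v).Adj x y :=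
  c.adj_spanningCoe_toSimpleGraph

lemma support_componentGraph_subset (c : (G.deleteIncidenceSet v).ConnectedComponent) :
    (componentGraph G v c).support ⊆ c.supp := fun _ hx =>
  (componentGraph_adj.1 ((mem_support _).1 hx).choose_spec).1

lemma componentGraph_le (c : (G.deleteIncidenceSet v).ConnectedComponent) :
    componentGraph G v c ≤ G := fun _ _ h => (deleteIncidenceSet_adj.1 (componentGraph_adj.1 h).2).1

lemma eq_of_mem_supp_deleteIncidenceSet {c : (G.deleteIncidenceSet v).ConnectedComponent} {x : V}
    (hv : v ∈ c.supp) (hx : x ∈ c.supp) : x = v := by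
  obtain ⟨w⟩ := c.reachable_of_mem_supp hv hx
  cases w with
  | nil => rfl
  | cons h _ => exact absurd rfl (deleteIncidenceSet_adj.1 h).2.1

lemma deleteIncidenceSet_componentWithVertex (c : (G.deleteIncidenceSet v).ConnectedComponent) :
    (componentWithVertex G v c).deleteIncidenceSet v = componentGraph G v c := by
  ext x y
  rw [deleteIncidenceSet_adj, componentWithVertex, spanningCoe_induce_adj,
    componentGraph_adj, deleteIncidenceSet_adj]
  constructor
  · rintro ⟨⟨hx, -, h⟩, hxv, hyv⟩
    exact ⟨hx.resolve_left hxv, h, hxv, hyv⟩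
  · rintro ⟨hx, h, hxv, hyv⟩
    have hD := deleteIncidenceSet_adj.2 ⟨h, hxv, hyv⟩
    exact ⟨⟨Or.inr hx, Or.inr (c.mem_supp_of_adj_mem_supp hx hD), h⟩, hxv, hyv⟩

lemma notMem_supp_of_adj {c : (G.deleteIncidenceSet v).ConnectedComponent} {x y : V}
    (h : (componentGraph G v c).Adj x y) : v ∉ c.supp := by
  rw [componentGraph_adj, deleteIncidenceSet_adj] at h
  exact fun hv => h.2.2.1 (eq_of_mem_supp_deleteIncidenceSet hv h.1)

lemma support_componentWithVertex_subset (c : (G.deleteIncidenceSet v).ConnectedComponent) :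
    (componentWithVertex G v c).support ⊆ insert v c.supp := fun _ hx =>
  ((spanningCoe_induce_adj G).1 ((mem_support _).1 hx).choose_spec).1

lemma mem_neighborSet_componentWithVertex {c : (G.deleteIncidenceSet v).ConnectedComponent}
    {x : V} : x ∈ (componentWithVertex G v c).neighborSet v ↔ x ∈ c.supp ∧ G.Adj v x := by
  rw [mem_neighborSet, componentWithVertex, spanningCoe_induce_adj]
  constructor
  · rintro ⟨-, hx, h⟩
    exact ⟨hx.resolve_left h.ne', h⟩
  · rintro ⟨hx, h⟩
    exact ⟨Set.mem_insert v _, Or.inr hx, h⟩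

lemma exists_adj_mem_supp (hconn : G.Connected) {c : (G.deleteIncidenceSet v).ConnectedComponent}
    (hv : v ∉ c.supp) : ∃ x ∈ c.supp, G.Adj v x := by
  obtain ⟨u, hu⟩ := c.nonempty_supp
  obtain ⟨d, -, hd, hd'⟩ := (hconn.preconnected u v).some.exists_boundary_dart _ hu hv
  obtain rfl : d.snd = v := by
    by_contra hne
    exact hd' (c.mem_supp_of_adj_mem_supp hd
      (deleteIncidenceSet_adj.2 ⟨d.adj, fun h => hv (h ▸ hd), hne⟩))
  exact ⟨d.fst, hd, d.adj.symm⟩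

lemma connected_induce_insert_supp (hconn : G.Connected)
    {c : (G.deleteIncidenceSet v).ConnectedComponent} (hv : v ∉ c.supp) :
    (G.induce (insert v c.supp)).Connected := by
  obtain ⟨x, hx, hvx⟩ := exists_adj_mem_supp hconn hv
  have hc : (G.induce c.supp).Preconnected := by
    rw [← induce_deleteIncidenceSet_of_notMem G hv]
    exact c.connected_toSimpleGraph.preconnected
  rw [Set.insert_eq]
  exact connected_induce_union (by simp) hc (Set.mem_singleton v) hx hvx

lemma sum_ncard_edgeSet_componentWithVertex_le [Finite V]
    [Fintype (G.deleteIncidenceSet v).ConnectedComponent] :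
    ∑ c, (componentWithVertex G v c).edgeSet.ncard ≤ G.edgeSet.ncard := by
  have hdisj : Pairwise fun c c' =>
      Disjoint (componentWithVertex G v c).edgeSet (componentWithVertex G v c').edgeSet := by
    intro c c' hcc'
    refine Set.disjoint_left.2 fun e he he' => hcc' ?_
    induction e with
    | h x y =>
      simp only [mem_edgeSet, componentWithVertex, spanningCoe_induce_adj] at he he'
      rcases eq_or_ne x v with rfl | hx
      · exact ConnectedComponent.eq_of_common_vertex (he.2.1.resolve_left he.2.2.ne')
          (he'.2.1.resolve_left he'.2.2.ne')
      · exact ConnectedComponent.eq_of_common_vertex (he.1.resolve_left hx) (he'.1.resolve_left hx)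
  rw [← finsum_eq_sum_of_fintype, ← Set.ncard_iUnion_of_finite (fun _ => Set.toFinite _) hdisj]
  refine Set.ncard_le_ncard (Set.iUnion_subset fun c => ?_) (Set.toFinite _)
  exact edgeSet_mono (G.spanningCoe_induce_le _)

lemma sdiff_adj_deleteIncidenceSet_componentWithVertex
    {c : (G.deleteIncidenceSet v).ConnectedComponent} {R X : SimpleGraph V} (hRX : R ≤ X)
    {x y : V} (hx : x ∈ c.supp) (hxy : (G \ X).Adj x y) (hxv : x ≠ v) (hyv : y ≠ v) :
    (componentGraph G v c \ R).Adj x y ∧ y ∈ c.supp := by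
  have hD : (G.deleteIncidenceSet v).Adj x y := deleteIncidenceSet_adj.2 ⟨hxy.1, hxv, hyv⟩
  exact ⟨⟨componentGraph_adj.2 ⟨hx, hD⟩, fun hr => hxy.2 (hRX hr)⟩,
    c.mem_supp_of_adj_mem_supp hx hD⟩

/-- A triangle of `G \ X` avoiding `v` lies in one component of `G - v`. -/
lemma eq_or_eq_or_eq_of_triangle {R : (G.deleteIncidenceSet v).ConnectedComponent → SimpleGraph V}
    {X : SimpleGraph V} (hRX : ∀ c, R c ≤ X)
    (hT : ∀ c, (componentGraph G v c \ R c).CliqueFree 3)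
    {x y z : V} (hxy : (G \ X).Adj x y) (hxz : (G \ X).Adj x z) (hyz : (G \ X).Adj y z) :
    x = v ∨ y = v ∨ z = v := by
  by_contra! hne
  obtain ⟨hxv, hyv, hzv⟩ := hne
  have hx := ConnectedComponent.connectedComponentMk_mem (G := G.deleteIncidenceSet v) (v := x)
  obtain ⟨h₁, hy⟩ := sdiff_adj_deleteIncidenceSet_componentWithVertex (hRX _) hx hxy hxv hyv
  obtain ⟨h₂, -⟩ := sdiff_adj_deleteIncidenceSet_componentWithVertex (hRX _) hx hxz hxv hzv
  obtain ⟨h₃, -⟩ := sdiff_adj_deleteIncidenceSet_componentWithVertex (hRX _) hy hyz hyv hzv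
  exact cliqueFree_three_iff.1 (hT _) x y z h₁ h₂ h₃

lemma iSup_le_of_le_deleteIncidenceSet
    {R : (G.deleteIncidenceSet v).ConnectedComponent → SimpleGraph V}
    (hR : ∀ c, R c ≤ componentGraph G v c) : (⨆ c, R c) ≤ G :=
  iSup_le fun c => (hR c).trans (componentGraph_le c)

lemma HasMatching.le_sum_of_le_deleteIncidenceSet [Finite V]
    [Fintype (G.deleteIncidenceSet v).ConnectedComponent]
    {R : (G.deleteIncidenceSet v).ConnectedComponent → SimpleGraph V} {k : ℕ}
    (hR : ∀ c, R c ≤ componentGraph G v c)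
    (hM : ∀ c, ¬HasMatching (R c) (arrowNum (componentGraph G v c) + 1))
    (h : HasMatching (⨆ c, R c) k) :
    k ≤ ∑ c, arrowNum (componentGraph G v c) := by
  classical
  refine h.le_sum (G.deleteIncidenceSet v).connectedComponentMk (fun c x y hxy => ?_) hM
  exact support_componentGraph_subset c ⟨y, hR c hxy⟩

/-- Colour red all edges at `v` and each component of `G - v` by an extremal colouring. -/
lemma le_sum_arrowNum_add_one [Finite V] [Fintype (G.deleteIncidenceSet v).ConnectedComponent]
    {n : ℕ}
    (hG : MatchingArrow G n) :
    n ≤ ∑ c, arrowNum (componentGraph G v c) + 1 := by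
  choose R hR hM hT using fun c => exists_extremal_colouring (componentGraph G v c)
  have hstar : ∀ x y, (G \ G.deleteIncidenceSet v).Adj x y → x = v ∨ y = v := fun x y h => by
    by_contra! hne
    exact h.2 (deleteIncidenceSet_adj.2 ⟨h.1, hne⟩)
  rcases hG _ (sup_le sdiff_le (iSup_le_of_le_deleteIncidenceSet hR)) with hmat | htri
  · cases n with
    | zero => omega
    | succ n =>
      exact Nat.succ_le_succ ((hmat.of_sup_left hstar).le_sum_of_le_deleteIncidenceSet hR hM)
  · refine absurd (cliqueFree_three_iff.2 fun x y z hxy hxz hyz => ?_) htri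
    have hv : ∀ {x y}, (G \ (G \ G.deleteIncidenceSet v ⊔ ⨆ c, R c)).Adj x y → x ≠ v :=
      fun {x y} h hx => h.2 (Or.inl ⟨h.1, fun hD => (deleteIncidenceSet_adj.1 hD).2.1 hx⟩)
    rcases eq_or_eq_or_eq_of_triangle (fun c => le_sup_of_le_right (le_iSup R c)) hT hxy hxz hyz
      with h | h | h
    exacts [hv hxy h, hv hyz h, hv hxz.symm h]

/-- Colour blue all edges at `v` and each component of `G - v` by an extremal colouring with no
blue edge between neighbours of `v`. -/
lemma le_sum_arrowNum [Finite V] [Fintype (G.deleteIncidenceSet v).ConnectedComponent] {n : ℕ}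
    (hG : MatchingArrow G n)
    (hc : ∀ c, ¬ForcesBlueNeighbourEdge (componentWithVertex G v c) v
      (arrowNum (componentGraph G v c))) :
    n ≤ ∑ c, arrowNum (componentGraph G v c) := by
  choose R hR hM hT hblue using fun c => by
    simpa [ForcesBlueNeighbourEdge, deleteIncidenceSet_componentWithVertex] using hc c
  rcases hG _ (iSup_le_of_le_deleteIncidenceSet hR) with hmat | htri
  · exact hmat.le_sum_of_le_deleteIncidenceSet hR hM
  refine absurd (cliqueFree_three_iff.2 fun x y z hxy hxz hyz => ?_) htri
  have hv : ∀ {y z}, (G \ ⨆ c, R c).Adj v y → (G \ ⨆ c, R c).Adj v z →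
      (G \ ⨆ c, R c).Adj y z → False := fun {y z} hy hz hyz => by
    have hyc := ConnectedComponent.connectedComponentMk_mem (G := G.deleteIncidenceSet v) (v := y)
    obtain ⟨h, hzc⟩ := sdiff_adj_deleteIncidenceSet_componentWithVertex (le_iSup R _) hyc hyz
      hy.1.ne' hz.1.ne'
    exact hblue _ y z h.1 h.2 (mem_neighborSet_componentWithVertex.2 ⟨hyc, hy.1⟩)
      (mem_neighborSet_componentWithVertex.2 ⟨hzc, hz.1⟩)
  rcases eq_or_eq_or_eq_of_triangle (le_iSup R) hT hxy hxz hyz with rfl | rfl | rfl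
  exacts [hv hxy hxz hyz, hv hxy.symm hyz hxz, hv hxz.symm hyz.symm hxy]

end Components

section Minimality

variable {V : Type} [Finite V]

def SparseGraphsDoNotArrowBelow (N : ℕ) : Prop :=
  ∀ k : ℕ, 0 < k → ∀ (W : Type), Finite W → ∀ H : SimpleGraph W, H.Connected →
    Nat.card W < N → H.edgeSet.ncard ≤ 4 * k - 2 → ¬ Arrows H (Matching k) (cycleGraph 3)

lemma four_mul_le_ncard_edgeSet_add_one (hmin : SparseGraphsDoNotArrowBelow (Nat.card V))
    {A : SimpleGraph V} {s : Set V} (hs : s ≠ Set.univ) (hA : A.support ⊆ s)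
    (hconn : (A.induce s).Connected) {k : ℕ} (hk : 0 < k) (h : MatchingArrow A k) :
    4 * k ≤ A.edgeSet.ncard + 1 := by
  have hA' : (A.induce s).spanningCoe = A := (A.spanningCoe_induce_eq_self s).2 hA
  have hE : (A.induce s).edgeSet.ncard = A.edgeSet.ncard := by
    conv_rhs => rw [← hA', edgeSet_map]
    exact (Set.ncard_image_of_injective _ (Function.Embedding.subtype s).sym2Map.injective).symm
  by_contra! hlt
  refine hmin k hk s inferInstance _ hconn ?_ (by omega) ?_
  · rw [Nat.card_coe_set_eq]
    exact Set.ncard_lt_card hs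
  · rw [← hA', ← arrows_iff_matchingArrow] at h
    exact Arrows.of_map matching_exists_adj cycleGraph_three_exists_adj h

variable {G : SimpleGraph V} {v : V}

lemma notMem_supp_of_arrowNum_pos {c : (G.deleteIncidenceSet v).ConnectedComponent}
    (h : 0 < arrowNum (componentGraph G v c)) : v ∉ c.supp := by
  obtain ⟨p, hp⟩ := (matchingArrow_arrowNum (componentGraph G v c)).hasMatching
  exact notMem_supp_of_adj (hp ⟨0, h⟩)

lemma four_mul_arrowNum_add_le (hmin : SparseGraphsDoNotArrowBelow (Nat.card V))
    (c : (G.deleteIncidenceSet v).ConnectedComponent) :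
    4 * arrowNum (componentGraph G v c) + ((componentWithVertex G v c).neighborSet v).ncard ≤
      (componentWithVertex G v c).edgeSet.ncard + 1 := by
  rw [← ncard_edgeSet_deleteIncidenceSet_add, deleteIncidenceSet_componentWithVertex]
  rcases Nat.eq_zero_or_pos (arrowNum (componentGraph G v c)) with h0 | hpos
  · omega
  have hv := notMem_supp_of_arrowNum_pos hpos
  have := four_mul_le_ncard_edgeSet_add_one hmin (s := c.supp) (fun h => hv (h ▸ Set.mem_univ v))
    (support_componentGraph_subset c)
    (by rw [componentGraph, induce_spanningCoe]; exact c.connected_toSimpleGraph)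
    hpos (matchingArrow_arrowNum _)
  omega

lemma four_mul_arrowNum_le (hmin : SparseGraphsDoNotArrowBelow (Nat.card V))
    (hconn : G.Connected) (c : (G.deleteIncidenceSet v).ConnectedComponent) :
    4 * arrowNum (componentGraph G v c) ≤ (componentWithVertex G v c).edgeSet.ncard := by
  rcases Nat.eq_zero_or_pos (arrowNum (componentGraph G v c)) with h0 | hpos
  · omega
  obtain ⟨x, hx, hvx⟩ := exists_adj_mem_supp hconn (notMem_supp_of_arrowNum_pos hpos)
  have hd : 0 < ((componentWithVertex G v c).neighborSet v).ncard :=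
    (Set.ncard_pos (Set.toFinite _)).2 ⟨x, mem_neighborSet_componentWithVertex.2 ⟨hx, hvx⟩⟩
  have := four_mul_arrowNum_add_le hmin c
  omega

lemma four_mul_arrowNum_succ_le (hmin : SparseGraphsDoNotArrowBelow (Nat.card V))
    (hconn : G.Connected) {c : (G.deleteIncidenceSet v).ConnectedComponent}
    (hc : ForcesBlueNeighbourEdge (componentWithVertex G v c) v
      (arrowNum (componentGraph G v c)))
    (hd : ((componentWithVertex G v c).neighborSet v).ncard ≤ 3)
    (hdeg : 3 < (G.neighborSet v).ncard) :
    4 * (arrowNum (componentGraph G v c) + 1) ≤ (componentWithVertex G v c).edgeSet.ncard + 1 := by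
  obtain ⟨R, hR, hM, hT⟩ := exists_extremal_colouring (componentGraph G v c)
  have hc' := hc
  rw [ForcesBlueNeighbourEdge, deleteIncidenceSet_componentWithVertex] at hc'
  obtain ⟨x, y, hxy, -, -⟩ := hc' R hR hM hT
  have hs : insert v c.supp ≠ Set.univ := fun h => by
    rw [componentWithVertex, h, spanningCoe_induce_univ] at hd
    omega
  refine four_mul_le_ncard_edgeSet_add_one hmin hs (support_componentWithVertex_subset c) ?_
    (Nat.succ_pos _) (hc.matchingArrow_succ (Set.toFinite _) hd)
  rw [componentWithVertex, induce_spanningCoe]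
  exact connected_induce_insert_supp hconn (notMem_supp_of_adj hxy.1)

end Minimality

end MatchingTriangle

open MatchingTriangle Finset

/-- Under the minimality hypotheses, the maximum degree of `G` is at most
three. -/
theorem max_degree_le_three (n : ℕ) (hn : 0 < n) (V : Type) [Finite V]
    (G : SimpleGraph V) (hconn : G.Connected) (hE : G.edgeSet.ncard ≤ 4 * n - 2)
    (harrow : Arrows G (Matching n) (cycleGraph 3))
    (hmin : ∀ k : ℕ, 0 < k → ∀ (W : Type), Finite W → ∀ H : SimpleGraph W,
      H.Connected →
      (Nat.card W < Nat.card V ∨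
        (Nat.card W = Nat.card V ∧ H.edgeSet.ncard < G.edgeSet.ncard)) →
      H.edgeSet.ncard ≤ 4 * k - 2 →
      ¬ Arrows H (Matching k) (cycleGraph 3)) :
    ∀ v : V, (G.neighborSet v).ncard ≤ 3 := by
  intro v
  by_contra! hdeg
  classical
  have : Fintype (G.deleteIncidenceSet v).ConnectedComponent := Fintype.ofFinite _
  have hsmall : SparseGraphsDoNotArrowBelow (Nat.card V) :=
    fun k hk W hW H hH hlt => hmin k hk W hW H hH (Or.inl hlt)
  have hG := arrows_iff_matchingArrow.1 harrow
  set b := fun c => arrowNum (componentGraph G v c)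
  set e := fun c => (componentWithVertex G v c).edgeSet.ncard
  have hsum : ∑ c, e c ≤ 4 * n - 2 := sum_ncard_edgeSet_componentWithVertex_le.trans hE
  have hb : n ≤ ∑ c, b c + 1 := le_sum_arrowNum_add_one hG
  have hbe : ∀ c, 4 * b c ≤ e c := four_mul_arrowNum_le hsmall hconn
  by_cases hforce : ∃ c, ForcesBlueNeighbourEdge (componentWithVertex G v c) v (b c)
  · obtain ⟨c₀, hc₀⟩ := hforce
    have hd₀ : ((componentWithVertex G v c₀).neighborSet v).ncard ≤ 3 := by
      have := sum_add_le_sum_add c₀ (fun c _ => hbe c) (four_mul_arrowNum_add_le hsmall c₀)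
      rw [← mul_sum] at this
      omega
    have := sum_add_le_sum_add c₀ (fun c _ => hbe c)
      (four_mul_arrowNum_succ_le hsmall hconn hc₀ hd₀ hdeg)
    rw [← mul_sum] at this
    omega
  · have : n ≤ ∑ c, b c := le_sum_arrowNum hG (not_exists.1 hforce)
    have : ∑ c, 4 * b c ≤ ∑ c, e c := sum_le_sum fun c _ => hbe c
    rw [← mul_sum] at this
    omega
end
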